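/- arXiv:1312.2738 — 2 statements merged into one kernel-verified Lean document; each statement's English description precedes it below -/
import Mathlib

section
/- Let k ∈ {2,…,n} and suppose no LSUS covers position k. Then every shortest unique substring covering k is of the form S[i..k] (it ends exactly at position k), and for any such S[i..k], the substring S[i..k−1] is a shortest unique substring covering position k−1; hence |SUS_k| = |SUS_{k−1}| + 1. -/
variable {α : Type*}

/-- `S[i..j]` is a unique substring of the string `S[1..n]`: it is a valid substring
(`1 ≤ i ≤ j ≤ n`) and there is no other starting position `i' ≠ i` (with
`i' + (j-i) ≤ n`) where the same string of characters occurs. -/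
def IsUnique (S : ℕ → α) (n i j : ℕ) : Prop :=
  1 ≤ i ∧ i ≤ j ∧ j ≤ n ∧
    ¬ ∃ i', 1 ≤ i' ∧ i' ≠ i ∧ i' + (j - i) ≤ n ∧
      ∀ d ≤ j - i, S (i' + d) = S (i + d)

/-- `S[i..j]` is a shortest unique substring covering position `k` (an `SUS_k`). -/
def IsSUS (S : ℕ → α) (n k i j : ℕ) : Prop :=
  IsUnique S n i j ∧ i ≤ k ∧ k ≤ j ∧
    ∀ i' j', IsUnique S n i' j' → i' ≤ k → k ≤ j' → j - i ≤ j' - i'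

/-- `S[k..j]` is the left-bounded shortest unique substring starting at `k`
(`LSUS_k`): the shortest unique substring starting at position `k`. -/
def IsLSUS (S : ℕ → α) (n k j : ℕ) : Prop :=
  IsUnique S n k j ∧ ∀ j', IsUnique S n k j' → j ≤ j'

/-- Extending a unique substring to the right preserves uniqueness. -/
lemma isUnique_extend (S : ℕ → α) (n i j j' : ℕ) (h : IsUnique S n i j)
    (hjj : j ≤ j') (hj'n : j' ≤ n) : IsUnique S n i j' := by
  obtain ⟨h1, h2, h3, h4⟩ := h
  refine ⟨h1, h2.trans hjj, hj'n, ?_⟩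
  rintro ⟨i', hi'1, hi'ne, hi'n, hagree⟩
  exact h4 ⟨i', hi'1, hi'ne, le_trans (by omega) hi'n, fun d hd => hagree d (by omega)⟩

/-- If no LSUS covers `k`, any unique substring covering `k` gives a unique
substring ending at `k - 1`. -/
lemma key_unique (S : ℕ → α) (n k : ℕ) (hk2 : 2 ≤ k) (hkn : k ≤ n)
    (h : ¬ ∃ a b, IsLSUS S n a b ∧ a ≤ k ∧ k ≤ b)
    {a b : ℕ} (hu : IsUnique S n a b) (hak : a ≤ k) (hkb : k ≤ b) :
    IsUnique S n a (k - 1) := by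
  classical
  have hex : ∃ j, IsUnique S n a j := ⟨b, hu⟩
  have hj0u : IsUnique S n a (Nat.find hex) := Nat.find_spec hex
  have hmin : ∀ j', IsUnique S n a j' → Nat.find hex ≤ j' :=
    fun j' hj' => Nat.find_min' hex hj'
  have hlt : Nat.find hex < k := by
    by_contra hc
    exact h ⟨a, Nat.find hex, ⟨hj0u, hmin⟩, hak, by omega⟩
  exact isUnique_extend S n a (Nat.find hex) (k - 1) hj0u (by omega) (by omega)

/-- Let `k ∈ {2,…,n}` and suppose no LSUS covers position `k`. Then every shortest
unique substring covering `k` ends exactly at position `k`; for any such `S[i..k]`,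
the substring `S[i..k-1]` is a shortest unique substring covering position `k-1`;
hence `|SUS_k| = |SUS_{k-1}| + 1`. -/
theorem sus_when_no_lsus_covers (S : ℕ → α) (n k : ℕ) (hk2 : 2 ≤ k) (hkn : k ≤ n)
    (h : ¬ ∃ a b, IsLSUS S n a b ∧ a ≤ k ∧ k ≤ b) :
    (∀ i j, IsSUS S n k i j → j = k) ∧
    (∀ i, IsSUS S n k i k → IsSUS S n (k - 1) i (k - 1)) ∧
    (∀ i j i' j', IsSUS S n k i j → IsSUS S n (k - 1) i' j' →
      j - i + 1 = (j' - i' + 1) + 1) := by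
  have part1 : ∀ i j, IsSUS S n k i j → j = k := by
    intro i j hs
    obtain ⟨hu, hik, hkj, hmin⟩ := hs
    by_contra hne
    have h1 : IsUnique S n i (k - 1) := key_unique S n k hk2 hkn h hu hik hkj
    have h2 : IsUnique S n i k :=
      isUnique_extend S n i (k - 1) k h1 (by omega) hkn
    have h3 := hmin i k h2 hik le_rfl
    have h4 := h1.2.1
    omega
  have part2 : ∀ i, IsSUS S n k i k → IsSUS S n (k - 1) i (k - 1) := by
    intro i hs
    obtain ⟨hu, hik, hkk, hmin⟩ := hs
    have h1 : IsUnique S n i (k - 1) := key_unique S n k hk2 hkn h hu hik le_rfl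
    refine ⟨h1, h1.2.1, le_rfl, ?_⟩
    intro i' j' hu' hi' hj'
    by_cases hck : k ≤ j'
    · have := hmin i' j' hu' (by omega) hck
      have := h1.2.1
      omega
    · have hu2 : IsUnique S n i' k :=
        isUnique_extend S n i' j' k hu' (by omega) hkn
      have := hmin i' k hu2 (by omega) le_rfl
      have := h1.2.1
      have := hu'.2.1
      omega
  refine ⟨part1, part2, ?_⟩
  intro i j i' j' hs hs'
  have hjk : j = k := part1 i j hs
  rw [hjk] at hs ⊢
  have hS2 : IsSUS S n (k - 1) i (k - 1) := part2 i hs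
  have hle1 : j' - i' ≤ (k - 1) - i := hs'.2.2.2 i (k - 1) hS2.1 hS2.2.1 le_rfl
  have hle2 : (k - 1) - i ≤ j' - i' := hS2.2.2.2 i' j' hs'.1 hs'.2.1 hs'.2.2.1
  have hik1 : i ≤ k - 1 := hS2.2.1
  have := hs'.1.2.1
  omega
end

section
/- For every k ∈ {2,…,n}, letting m = |SUS_k|, the set of all shortest unique substrings covering k is exactly the union of (1) the set of LSUSes that cover k and have length m, and (2) the set of substrings S[i..k] of length m such that S[i..k−1] is a shortest unique substring covering k−1 that ends at position k−1. -/
variable {α : Type*}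

lemma isUnique_ext (S : ℕ → α) (n i j j' : ℕ) (h : IsUnique S n i j) (hjj : j ≤ j')
    (hn : j' ≤ n) : IsUnique S n i j' := by
  obtain ⟨h1, h2, h3, h4⟩ := h
  refine ⟨h1, le_trans h2 hjj, hn, ?_⟩
  rintro ⟨i', hi1, hne, hlen, heq⟩
  exact h4 ⟨i', hi1, hne, by omega, fun d hd => heq d (by omega)⟩

/-- For every `k ∈ {2,…,n}`, letting `m = |SUS_k|`, the set of all shortest unique
substrings covering `k` is exactly the union of (1) the set of LSUSes that cover `k`
and have length `m`, and (2) the set of substrings `S[i..k]` of length `m` such that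
`S[i..k-1]` is a shortest unique substring covering `k-1` that ends at `k-1`. -/
theorem sus_set_characterization (S : ℕ → α) (n k a b m : ℕ) (hk2 : 2 ≤ k) (hkn : k ≤ n)
    (hab : IsSUS S n k a b) (hm : m = b - a + 1) :
    ∀ i j, IsSUS S n k i j ↔
      ((IsLSUS S n i j ∧ i ≤ k ∧ k ≤ j ∧ j - i + 1 = m) ∨
       (j = k ∧ j - i + 1 = m ∧ i < k ∧ IsSUS S n (k - 1) i (k - 1))) := by
  obtain ⟨habu, hak, hkb, habmin⟩ := hab
  intro i j
  constructor
  · rintro ⟨hu, hik, hkj, hmin⟩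
    have hiji : i ≤ j := hu.2.1
    have hlen1 : j - i ≤ b - a := hmin a b habu hak hkb
    have hlen2 : b - a ≤ j - i := habmin i j hu hik hkj
    have hlen : j - i + 1 = m := by omega
    rcases lt_or_eq_of_le hkj with hlt | heq
    · -- k < j : LSUS branch
      left
      refine ⟨⟨hu, ?_⟩, hik, hkj, hlen⟩
      intro j' hu'
      by_contra hcon
      push_neg at hcon
      rcases le_or_gt k j' with hkj' | hj'k
      · have := hmin i j' hu' hik hkj'
        have := hu'.2.1
        omega
      · have huk : IsUnique S n i k := isUnique_ext S n i j' k hu' (by omega) hkn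
        have := hmin i k huk hik le_rfl
        omega
    · -- j = k
      by_cases hL : ∀ j', IsUnique S n i j' → j ≤ j'
      · left
        exact ⟨⟨hu, hL⟩, hik, hkj, hlen⟩
      · right
        push_neg at hL
        obtain ⟨j'', hu'', hj''⟩ := hL
        have hij'' : i ≤ j'' := hu''.2.1
        have hik' : i < k := by omega
        have hukm : IsUnique S n i (k - 1) :=
          isUnique_ext S n i j'' (k - 1) hu'' (by omega) (by omega)
        refine ⟨heq.symm, hlen, hik', hukm, by omega, le_rfl, ?_⟩
        intro i' j' hu' hi' hj'
        rcases le_or_gt k j' with hkj' | hj'k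
        · have := hmin i' j' hu' (by omega) hkj'
          omega
        · have hj'eq : j' = k - 1 := by omega
          have huk' : IsUnique S n i' k :=
            isUnique_ext S n i' j' k hu' (by omega) hkn
          have := hmin i' k huk' (by omega) le_rfl
          have := hu'.2.1
          omega
  · rintro (⟨⟨hu, _⟩, hik, hkj, hlen⟩ | ⟨hjk, hlen, hik, hus, hik1, hk1, hmin1⟩)
    · refine ⟨hu, hik, hkj, ?_⟩
      intro i' j' hu' hi' hj'
      have := habmin i' j' hu' hi' hj'
      have := hu.2.1
      omega
    · have huk : IsUnique S n i k :=
        isUnique_ext S n i (k - 1) k hus (by omega) hkn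
      subst hjk
      refine ⟨huk, le_of_lt hik, le_rfl, ?_⟩
      intro i' j' hu' hi' hj'
      have := habmin i' j' hu' hi' hj'
      omega
end
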